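/- Let L₁, L₂ be real symmetric positive semidefinite N×N matrices (graph Laplacians), g a spectral filter, P a permutation matrix, and write G₁ = g(L₁), G₂ = g(L₂). Define W²(P) = Tr(G₁²) + Tr(P G₂² Pᵀ) − 2 Tr(√(G₁ P G₂² Pᵀ G₁)) and W̃²(P) = Tr(G₁²) + Tr(G₂²) − 2 Tr(G₁ P G₂ Pᵀ). Then W²(P) ≤ W̃²(P). -/

import Mathlib

open Matrix

/-- The spectral application of `g : ℝ → ℝ` to a symmetric real matrix `L`. -/
noncomputable def specApply {N : ℕ} (g : ℝ → ℝ) {L : Matrix (Fin N) (Fin N) ℝ}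
    (hL : L.IsHermitian) : Matrix (Fin N) (Fin N) ℝ :=
  (hL.eigenvectorUnitary : Matrix (Fin N) (Fin N) ℝ) * Matrix.diagonal (g ∘ hL.eigenvalues) *
    star (hL.eigenvectorUnitary : Matrix (Fin N) (Fin N) ℝ)

/-- The positive semidefinite square root of a positive semidefinite matrix (the definition
`Matrix.PosSemidef.sqrt` of the older Mathlib, which has since been removed). -/
noncomputable def Matrix.PosSemidef.sqrt {n 𝕜 : Type*} [Fintype n] [DecidableEq n] [RCLike 𝕜] [PartialOrder 𝕜] [StarOrderedRing 𝕜]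
    {A : Matrix n n 𝕜} (hA : A.PosSemidef) : Matrix n n 𝕜 :=
  (hA.1.eigenvectorUnitary : Matrix n n 𝕜) * diagonal ((↑) ∘ (√·) ∘ hA.1.eigenvalues) *
    (star hA.1.eigenvectorUnitary : Matrix n n 𝕜)

/-!
With `C = G₁ P G₂ Pᵀ` one has `C Cᵀ = G₁ P G₂² Pᵀ G₁` (as `G₁`, `G₂` are symmetric) and
`Tr (P G₂² Pᵀ) = Tr G₂²`, so the claim reduces to `Tr C ≤ Tr √(C Cᵀ)`. Diagonalising
`C Cᵀ = U Λ Uᵀ`, the `i`-th row of `Uᵀ C` has norm `√λᵢ`, so Cauchy–Schwarz against the unit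
columns of `U` bounds `Tr C = Tr (Uᵀ C U)` by `∑ √λᵢ = Tr √(C Cᵀ)`.
-/

namespace Matrix

variable {n : Type*} [Fintype n]

theorem trace_mul_le_sum_sqrt_diag (A B : Matrix n n ℝ) :
    (A * B).trace ≤ ∑ i, √((A * Aᵀ) i i) * √((Bᵀ * B) i i) := by
  refine Finset.sum_le_sum fun i _ => ?_
  simpa [mul_apply, pow_two] using
    Real.sum_mul_le_sqrt_mul_sqrt Finset.univ (fun j => A i j) (fun j => B j i)

theorem PosSemidef.trace_sqrt {𝕜 : Type*} [DecidableEq n] [RCLike 𝕜] [PartialOrder 𝕜]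
    [StarOrderedRing 𝕜] {M : Matrix n n 𝕜} (hM : M.PosSemidef) :
    hM.sqrt.trace = ∑ i, ((√(hM.1.eigenvalues i) : ℝ) : 𝕜) := by
  rw [PosSemidef.sqrt, trace_mul_cycle, Unitary.coe_star_mul_self, Matrix.one_mul,
    trace_diagonal]
  rfl

theorem trace_le_trace_sqrt_of_mul_transpose_eq [DecidableEq n] {C M : Matrix n n ℝ}
    (hM : M.PosSemidef) (h : C * Cᵀ = M) : C.trace ≤ hM.sqrt.trace := by
  set U : Matrix n n ℝ := (hM.1.eigenvectorUnitary : Matrix n n ℝ)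
  have hUU : Uᵀ * U = 1 := Unitary.coe_star_mul_self hM.1.eigenvectorUnitary
  have hUU' : U * Uᵀ = 1 := Unitary.coe_mul_star_self hM.1.eigenvectorUnitary
  have hdiag : Uᵀ * M * U = diagonal hM.1.eigenvalues := by
    have h := hM.1.conjStarAlgAut_star_eigenvectorUnitary
    simp only [Unitary.conjStarAlgAut_star_apply, RCLike.ofReal_real_eq_id] at h
    exact h
  calc C.trace = ((Uᵀ * C) * U).trace := by
        rw [Matrix.mul_assoc, trace_mul_comm, Matrix.mul_assoc, hUU', Matrix.mul_one]
    _ ≤ ∑ i, √(((Uᵀ * C) * (Uᵀ * C)ᵀ) i i) * √((Uᵀ * U) i i) :=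
        trace_mul_le_sum_sqrt_diag _ _
    _ = ∑ i, √(hM.1.eigenvalues i) := by
        rw [transpose_mul, transpose_transpose, hUU, ← Matrix.mul_assoc, Matrix.mul_assoc Uᵀ,
          h, hdiag]
        simp
    _ = hM.sqrt.trace := hM.trace_sqrt.symm

theorem IsHermitian.specApply {N : ℕ} (g : ℝ → ℝ) {L : Matrix (Fin N) (Fin N) ℝ}
    (hL : L.IsHermitian) : (specApply g hL).IsHermitian := by
  simp [IsHermitian, _root_.specApply, star_eq_conjTranspose, Matrix.mul_assoc]

end Matrix

theorem stmt_7_general {N : ℕ} (g : ℝ → ℝ)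
    (L₁ L₂ : Matrix (Fin N) (Fin N) ℝ) (hL₁ : L₁.PosSemidef) (hL₂ : L₂.PosSemidef)
    (σ : Equiv.Perm (Fin N))
    (G₁ G₂ : Matrix (Fin N) (Fin N) ℝ)
    (hG₁ : G₁ = specApply g hL₁.isHermitian) (hG₂ : G₂ = specApply g hL₂.isHermitian)
    (hM : (G₁ * σ.permMatrix ℝ * (G₂ * G₂) * (σ.permMatrix ℝ)ᵀ * G₁).PosSemidef) :
    (G₁ * G₁).trace + (σ.permMatrix ℝ * (G₂ * G₂) * (σ.permMatrix ℝ)ᵀ).trace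
        - 2 * hM.sqrt.trace
      ≤ (G₁ * G₁).trace + (G₂ * G₂).trace
        - 2 * (G₁ * σ.permMatrix ℝ * G₂ * (σ.permMatrix ℝ)ᵀ).trace := by
  set P : Matrix (Fin N) (Fin N) ℝ := σ.permMatrix ℝ
  have hPP : Pᵀ * P = 1 := by
    rw [transpose_permMatrix, ← permMatrix_mul, mul_inv_cancel, permMatrix_one]
  have hG₁T : G₁ᵀ = G₁ := hG₁ ▸ (hL₁.isHermitian.specApply g).eq
  have hG₂T : G₂ᵀ = G₂ := hG₂ ▸ (hL₂.isHermitian.specApply g).eq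
  have htrace : (P * (G₂ * G₂) * Pᵀ).trace = (G₂ * G₂).trace := by
    rw [trace_mul_cycle, hPP, Matrix.one_mul]
  have hC : (G₁ * P * G₂ * Pᵀ) * (G₁ * P * G₂ * Pᵀ)ᵀ = G₁ * P * (G₂ * G₂) * Pᵀ * G₁ := by
    simp only [transpose_mul, transpose_transpose, hG₁T, hG₂T, Matrix.mul_assoc]
    rw [← Matrix.mul_assoc Pᵀ P, hPP, Matrix.one_mul]
  have htrace_le := trace_le_trace_sqrt_of_mul_transpose_eq hM hC
  linarith

/-- With `G₁ = g(L₁)`, `G₂ = g(L₂)` for a nonnegative spectral filter `g` and PSD Laplacians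
`L₁`, `L₂`, and `P` a permutation matrix, the Gaussian squared 2-Wasserstein cost
`W²(P) = Tr(G₁²) + Tr(P G₂² Pᵀ) − 2 Tr(√(G₁ P G₂² Pᵀ G₁))` is bounded above by the surrogate
`W̃²(P) = Tr(G₁²) + Tr(G₂²) − 2 Tr(G₁ P G₂ Pᵀ)`. -/
theorem stmt_7 {N : ℕ} (g : ℝ → ℝ) (hg : ∀ x, 0 ≤ g x)
    (L₁ L₂ : Matrix (Fin N) (Fin N) ℝ) (hL₁ : L₁.PosSemidef) (hL₂ : L₂.PosSemidef)
    (σ : Equiv.Perm (Fin N))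
    (G₁ G₂ : Matrix (Fin N) (Fin N) ℝ)
    (hG₁ : G₁ = specApply g hL₁.isHermitian) (hG₂ : G₂ = specApply g hL₂.isHermitian)
    (hM : (G₁ * σ.permMatrix ℝ * (G₂ * G₂) * (σ.permMatrix ℝ)ᵀ * G₁).PosSemidef) :
    (G₁ * G₁).trace + (σ.permMatrix ℝ * (G₂ * G₂) * (σ.permMatrix ℝ)ᵀ).trace
        - 2 * hM.sqrt.trace
      ≤ (G₁ * G₁).trace + (G₂ * G₂).trace
        - 2 * (G₁ * σ.permMatrix ℝ * G₂ * (σ.permMatrix ℝ)ᵀ).trace :=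
  stmt_7_general g L₁ L₂ hL₁ hL₂ σ G₁ G₂ hG₁ hG₂ hM
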